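/- arXiv:2007.07815 — 5 statements merged into one kernel-verified Lean document; each statement's English description precedes it below -/
import Mathlib

section
/- Let M be the 2×2 real matrix with entries M₁₁ = -(β₅+β₃+μ), M₁₂ = β₄, M₂₁ = β₃, M₂₂ = -(β₄+β₉+μ), where all parameters are nonnegative and μ > 0. If U : [0,∞) → ℝ² satisfies U'(t) = M U(t) + F(t) with F(t) componentwise nonnegative and both components of U(0) positive, then both components of U(t) are positive for all t ≥ 0. -/
/-!
A Metzler matrix `M` pushes each component of a solution of `U' = M U + F` upwards as long as
the other components are nonnegative: then `U_i' ≥ M_ii U_i`, so `exp (-M_ii t) U_i t` is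
nondecreasing. Hence no component can reach `0` at the first time some component does.
-/

open Set Matrix

def Matrix.IsMetzler {ι R : Type*} [Zero R] [LE R] (M : Matrix ι ι R) : Prop :=
  ∀ i j, i ≠ j → 0 ≤ M i j

theorem Matrix.IsMetzler.diag_mul_le_mulVec {ι R : Type*} [Fintype ι] [Semiring R]
    [PartialOrder R] [IsOrderedRing R] {M : Matrix ι ι R} (hM : M.IsMetzler)
    {v : ι → R} (hv : 0 ≤ v) (i : ι) : M i i * v i ≤ (M *ᵥ v) i := by
  classical
  rw [Matrix.mulVec, dotProduct, ← Finset.add_sum_erase _ _ (Finset.mem_univ i)]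
  refine le_add_of_nonneg_right (Finset.sum_nonneg fun j hj => ?_)
  exact mul_nonneg (hM i j (Finset.ne_of_mem_erase hj).symm) (hv j)

theorem pos_of_mul_le_hasDerivAt {u u' : ℝ → ℝ} {c T : ℝ} (hT : 0 ≤ T)
    (hcont : ContinuousOn u (Icc 0 T)) (hderiv : ∀ t ∈ Ioo 0 T, HasDerivAt u (u' t) t)
    (hle : ∀ t ∈ Ioo 0 T, c * u t ≤ u' t) (h0 : 0 < u 0) : 0 < u T := by
  have hmono : MonotoneOn (fun t => Real.exp (-c * t) * u t) (Icc 0 T) := by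
    refine monotoneOn_of_hasDerivWithinAt_nonneg (convex_Icc 0 T)
      (f' := fun t => Real.exp (-c * t) * (u' t - c * u t)) ?_ (fun t ht => ?_) (fun t ht => ?_)
    · exact (Real.continuous_exp.comp (continuous_const_mul (-c))).continuousOn.mul hcont
    · rw [interior_Icc] at ht
      have hexp : HasDerivAt (fun t => Real.exp (-c * t)) (Real.exp (-c * t) * -c) t := by
        simpa using ((hasDerivAt_id t).const_mul (-c)).exp
      exact (hexp.mul (hderiv t ht)).hasDerivWithinAt.congr_deriv (by ring)
    · rw [interior_Icc] at ht
      exact mul_nonneg (Real.exp_pos _).le (sub_nonneg.2 (hle t ht))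
  have h0T := hmono (left_mem_Icc.2 hT) (right_mem_Icc.2 hT) hT
  simp only [mul_zero, Real.exp_zero, one_mul] at h0T
  exact pos_of_mul_pos_right (h0.trans_le h0T) (Real.exp_pos _).le

theorem Matrix.IsMetzler.pos_of_hasDerivAt {ι : Type*} [Fintype ι]
    {M : Matrix ι ι ℝ} (hM : M.IsMetzler) {U F : ℝ → ι → ℝ}
    (hFpos : ∀ t ∈ Ici (0:ℝ), ∀ i, 0 ≤ F t i)
    (hU : ∀ t ∈ Ici (0:ℝ), ∀ i, HasDerivAt (fun s => U s i) ((M *ᵥ U t) i + F t i) t)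
    (hU0 : ∀ i, 0 < U 0 i) :
    ∀ t ∈ Ici (0:ℝ), ∀ i, 0 < U t i := by
  by_contra! hbad
  set S := ⋃ i, Ici (0:ℝ) ∩ (fun t => U t i) ⁻¹' Iic 0
  have hS_closed : IsClosed S := isClosed_iUnion_of_finite fun i =>
    ContinuousOn.preimage_isClosed_of_isClosed
      (fun t ht => (hU t ht i).continuousAt.continuousWithinAt) isClosed_Ici isClosed_Iic
  have hS_nonempty : S.Nonempty := by
    obtain ⟨t, ht, i, hti⟩ := hbad
    exact ⟨t, mem_iUnion.2 ⟨i, ht, hti⟩⟩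
  have hS_bdd : BddBelow S := ⟨0, fun t ht => by
    obtain ⟨i, ht, -⟩ := mem_iUnion.1 ht
    exact ht⟩
  obtain ⟨i, ht₀, hUi⟩ := mem_iUnion.1 (hS_closed.csInf_mem hS_nonempty hS_bdd)
  set t₀ := sInf S
  have hbefore : ∀ t ∈ Ico 0 t₀, ∀ j, 0 < U t j := fun t ht j => by
    by_contra! htj
    exact (csInf_le hS_bdd (mem_iUnion.2 ⟨j, ht.1, htj⟩)).not_gt ht.2
  refine hUi.not_gt (pos_of_mul_le_hasDerivAt (c := M i i) ht₀ (fun t ht => ?_)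
    (fun t ht => hU t ht.1.le i) (fun t ht => ?_) (hU0 i))
  · exact (hU t ht.1 i).continuousAt.continuousWithinAt
  · calc M i i * U t i ≤ (M *ᵥ U t) i :=
          hM.diag_mul_le_mulVec (fun j => (hbefore t (Ioo_subset_Ico_self ht) j).le) i
      _ ≤ (M *ᵥ U t) i + F t i := le_add_of_nonneg_right (hFpos t ht.1.le i)

theorem metzler_positivity_general
    (β₃ β₄ β₅ β₉ μ : ℝ)
    (h3 : 0 ≤ β₃) (h4 : 0 ≤ β₄)
    (M : Matrix (Fin 2) (Fin 2) ℝ)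
    (hM : M = !![-(β₅ + β₃ + μ), β₄; β₃, -(β₄ + β₉ + μ)])
    (U F : ℝ → Fin 2 → ℝ)
    (hFpos : ∀ t ∈ Set.Ici (0:ℝ), ∀ i, 0 ≤ F t i)
    (hU : ∀ t ∈ Set.Ici (0:ℝ), ∀ i,
      HasDerivAt (fun s => U s i) (M.mulVec (U t) i + F t i) t)
    (hU0 : ∀ i, 0 < U 0 i) :
    ∀ t ∈ Set.Ici (0:ℝ), ∀ i, 0 < U t i := by
  have hMetzler : M.IsMetzler := by
    subst hM
    intro i j hij
    fin_cases i <;> fin_cases j <;> simp_all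
  exact hMetzler.pos_of_hasDerivAt hFpos hU hU0

theorem metzler_positivity
    (β₃ β₄ β₅ β₉ μ : ℝ)
    (h3 : 0 ≤ β₃) (h4 : 0 ≤ β₄) (h5 : 0 ≤ β₅) (h9 : 0 ≤ β₉) (hμ : 0 < μ)
    (M : Matrix (Fin 2) (Fin 2) ℝ)
    (hM : M = !![-(β₅ + β₃ + μ), β₄; β₃, -(β₄ + β₉ + μ)])
    (U F : ℝ → Fin 2 → ℝ)
    (hF : ∀ i, Continuous (fun t => F t i))
    (hFpos : ∀ t ∈ Set.Ici (0:ℝ), ∀ i, 0 ≤ F t i)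
    (hU : ∀ t ∈ Set.Ici (0:ℝ), ∀ i,
      HasDerivAt (fun s => U s i) (M.mulVec (U t) i + F t i) t)
    (hU0 : ∀ i, 0 < U 0 i) :
    ∀ t ∈ Set.Ici (0:ℝ), ∀ i, 0 < U t i :=
  metzler_positivity_general β₃ β₄ β₅ β₉ μ h3 h4 M hM U F hFpos hU hU0
end

section
/- Let A = (a_ij) be an n×n real matrix with a_ii ≥ Σ_{j≠i} |a_ij| for all i, and set r_i = Σ_{j>i} |a_ij|. Then ∏_{i=1}^n (a_ii - r_i) ≤ det A ≤ ∏_{i=1}^n (a_ii + r_i). -/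
/-!
Eliminate the last column using the last row as pivot row. The determinant becomes
`a * det A'`, where `a = A n n ≥ 0` and `A'` is the Schur complement of `a`. Put
`tᵢ = |A i n| / a`. Then row `i` of `A'` differs from row `i` of `A` entrywise by at
most `tᵢ * |A n j|`, and by dominance of the last row these deviations add up to at most
`|A i n|`. That is exactly the term `rᵢ` loses when the last column goes, so `A'` is again
dominant and `A i i - rᵢ ≤ A' i i - r'ᵢ ≤ A' i i + r'ᵢ ≤ A i i + rᵢ`. Induction on `n` then
gives both bounds, as `r` vanishes on the last row.
-/

open Finset

namespace Fin

variable {M : Type*} [AddCommMonoid M] {n : ℕ}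

theorem sum_univ_sdiff_castSucc (g : Fin (n + 1) → M) (i : Fin n) :
    ∑ j ∈ univ \ {i.castSucc}, g j = g (last n) + ∑ j ∈ univ \ {i}, g j.castSucc := by
  simp only [sdiff_singleton_eq_erase, ← filter_ne', sum_filter, sum_univ_castSucc,
    castSucc_inj, ne_eq, (castSucc_lt_last i).ne', not_false_eq_true, if_true]
  exact add_comm _ _

theorem sum_univ_sdiff_last (g : Fin (n + 1) → M) :
    ∑ j ∈ univ \ {last n}, g j = ∑ j : Fin n, g j.castSucc := by
  simp only [sdiff_singleton_eq_erase, ← filter_ne', sum_filter, sum_univ_castSucc,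
    ne_eq, (castSucc_lt_last _).ne, not_false_eq_true, if_true, not_true_eq_false, if_false,
    add_zero]

theorem sum_filter_castSucc_lt (g : Fin (n + 1) → M) (i : Fin n) :
    ∑ j ∈ univ.filter (fun j => i.castSucc < j), g j
      = g (last n) + ∑ j ∈ univ.filter (fun j => i < j), g j.castSucc := by
  rw [sum_filter, sum_filter, sum_univ_castSucc]
  simp only [castSucc_lt_castSucc_iff, castSucc_lt_last, if_true]
  exact add_comm _ _

end Fin

namespace Matrix

section Field

variable {K : Type*} [Field K] {n : ℕ}

/-- The Schur complement of the pivot `A (last n) (last n)`. -/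
def schurLast (A : Matrix (Fin (n + 1)) (Fin (n + 1)) K) : Matrix (Fin n) (Fin n) K :=
  fun i j => A i.castSucc j.castSucc
    - A i.castSucc (Fin.last n) / A (Fin.last n) (Fin.last n) * A (Fin.last n) j.castSucc

theorem det_eq_mul_det_schurLast (A : Matrix (Fin (n + 1)) (Fin (n + 1)) K)
    (hA : A (Fin.last n) (Fin.last n) ≠ 0) :
    A.det = A (Fin.last n) (Fin.last n) * A.schurLast.det := by
  set L := Fin.last n
  let c : Fin (n + 1) → K := fun i => if i = L then 0 else -(A i L / A L L)
  let B : Matrix (Fin (n + 1)) (Fin (n + 1)) K := fun i j => A i j + c i * A L j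
  have hdet : B.det = A.det :=
    det_eq_of_forall_row_eq_smul_add_const c L (by simp [c]) fun _ _ => rfl
  have hcol : ∀ i ≠ L, B i L = 0 := by
    intro i hi
    simp [B, c, hi, hA]
  have hsub : B.submatrix Fin.castSucc Fin.castSucc = A.schurLast := by
    ext i j
    change A _ _ + c i.castSucc * A L _ = _
    have hiL : i.castSucc ≠ L := (Fin.castSucc_lt_last i).ne
    simp only [c, schurLast, if_neg hiL]
    ring
  have hLL : B L L = A L L := by simp [B, c]
  rw [← hdet, det_succ_column B L, sum_eq_single L (fun i _ hi => by simp [hcol i hi])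
    (by simp), Fin.succAbove_last, hsub, hLL, ← two_mul, pow_mul, neg_one_sq, one_pow, one_mul]

end Field

section Dominance

variable {ι : Type*} [Fintype ι]

def IsDiagDominant [DecidableEq ι] (A : Matrix ι ι ℝ) : Prop :=
  ∀ i, ∑ j ∈ univ \ {i}, |A i j| ≤ A i i

def superDiagAbsSum [LinearOrder ι] (A : Matrix ι ι ℝ) (i : ι) : ℝ :=
  ∑ j ∈ univ.filter (fun j => i < j), |A i j|

theorem superDiagAbsSum_nonneg [LinearOrder ι] (A : Matrix ι ι ℝ) (i : ι) :
    0 ≤ superDiagAbsSum A i :=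
  sum_nonneg fun _ _ => abs_nonneg _

namespace IsDiagDominant

variable [DecidableEq ι] {A : Matrix ι ι ℝ}

theorem diag_nonneg (hA : A.IsDiagDominant) (i : ι) : 0 ≤ A i i :=
  (sum_nonneg fun _ _ => abs_nonneg _).trans (hA i)

theorem eq_zero_of_diag_eq_zero (hA : A.IsDiagDominant) {i : ι} (hi : A i i = 0) (j : ι) :
    A i j = 0 := by
  obtain rfl | hji := eq_or_ne j i
  · exact hi
  have := (sum_eq_zero_iff_of_nonneg fun _ _ => abs_nonneg _).1
    ((hA i).trans hi.le |>.antisymm (sum_nonneg fun _ _ => abs_nonneg _))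
  exact abs_eq_zero.1 (this j (by simp [hji]))

theorem superDiagAbsSum_le [LinearOrder ι] (hA : A.IsDiagDominant) (i : ι) :
    superDiagAbsSum A i ≤ A i i := by
  refine le_trans (sum_le_sum_of_subset_of_nonneg ?_ fun _ _ _ => abs_nonneg _) (hA i)
  intro j hj
  simp only [mem_filter] at hj
  simpa using hj.2.ne'

end IsDiagDominant

end Dominance

section SchurLast

variable {n : ℕ}

theorem superDiagAbsSum_last (A : Matrix (Fin (n + 1)) (Fin (n + 1)) ℝ) :
    superDiagAbsSum A (Fin.last n) = 0 := by
  rw [superDiagAbsSum, filter_false_of_mem fun j _ => (Fin.le_last j).not_gt, sum_empty]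

theorem superDiagAbsSum_castSucc (A : Matrix (Fin (n + 1)) (Fin (n + 1)) ℝ) (i : Fin n) :
    superDiagAbsSum A i.castSucc
      = |A i.castSucc (Fin.last n)|
        + ∑ j ∈ univ.filter (fun j => i < j), |A i.castSucc j.castSucc| :=
  Fin.sum_filter_castSucc_lt (fun j => |A i.castSucc j|) i

variable {A : Matrix (Fin (n + 1)) (Fin (n + 1)) ℝ}

theorem IsDiagDominant.schurLast_row_bounds (hA : A.IsDiagDominant) (i : Fin n)
    {S : Finset (Fin n)} (hiS : i ∉ S) :
    A i.castSucc i.castSucc - (|A i.castSucc (Fin.last n)| + ∑ j ∈ S, |A i.castSucc j.castSucc|)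
        ≤ A.schurLast i i - ∑ j ∈ S, |A.schurLast i j| ∧
      A.schurLast i i + ∑ j ∈ S, |A.schurLast i j|
        ≤ A i.castSucc i.castSucc
          + (|A i.castSucc (Fin.last n)| + ∑ j ∈ S, |A i.castSucc j.castSucc|) := by
  set L := Fin.last n
  set a := A L L
  set t := |A i.castSucc L| / a
  have ha : 0 ≤ a := hA.diag_nonneg L
  have ht : 0 ≤ t := div_nonneg (abs_nonneg _) ha
  -- an inequality, not an equation: for `a = 0` we get `t = 0` from `x / 0 = 0`
  have hta : t * a ≤ |A i.castSucc L| := by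
    obtain ha0 | ha0 := ha.eq_or_lt
    · simp [← ha0]
    · exact (div_mul_cancel₀ _ ha0.ne').le
  have hdev : ∀ j, |A.schurLast i j - A i.castSucc j.castSucc| = t * |A L j.castSucc| := by
    intro j
    simp [schurLast, t, abs_mul, abs_div, abs_of_nonneg ha, L, a]
  have hrowL : |A L i.castSucc| + ∑ j ∈ S, |A L j.castSucc| ≤ a := by
    rw [← sum_insert hiS (f := fun j => |A L j.castSucc|)]
    refine le_trans ?_ (hA L)
    rw [Fin.sum_univ_sdiff_last (fun j => |A L j|)]
    exact sum_le_sum_of_subset_of_nonneg (subset_univ _) fun _ _ _ => abs_nonneg _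
  have hdiag := abs_sub_le_iff.1 (hdev i).le
  have hsum : ∑ j ∈ S, |A.schurLast i j|
      ≤ ∑ j ∈ S, |A i.castSucc j.castSucc| + t * ∑ j ∈ S, |A L j.castSucc| := by
    rw [mul_sum, ← sum_add_distrib]
    exact sum_le_sum fun j _ => by
      linarith [abs_sub_abs_le_abs_sub (A.schurLast i j) (A i.castSucc j.castSucc), hdev j]
  have := mul_le_mul_of_nonneg_left hrowL ht
  rw [mul_add] at this
  constructor <;> linarith

theorem IsDiagDominant.schurLast (hA : A.IsDiagDominant) : A.schurLast.IsDiagDominant := by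
  intro i
  have hrow := hA i.castSucc
  rw [Fin.sum_univ_sdiff_castSucc (fun j => |A i.castSucc j|)] at hrow
  linarith [(hA.schurLast_row_bounds i (S := univ \ {i}) (by simp)).1]

theorem IsDiagDominant.sub_superDiagAbsSum_castSucc_le (hA : A.IsDiagDominant) (i : Fin n) :
    A i.castSucc i.castSucc - superDiagAbsSum A i.castSucc
      ≤ A.schurLast i i - superDiagAbsSum A.schurLast i := by
  rw [superDiagAbsSum_castSucc]
  exact (hA.schurLast_row_bounds i (by simp)).1

theorem IsDiagDominant.add_superDiagAbsSum_schurLast_le (hA : A.IsDiagDominant) (i : Fin n) :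
    A.schurLast i i + superDiagAbsSum A.schurLast i
      ≤ A i.castSucc i.castSucc + superDiagAbsSum A i.castSucc := by
  rw [superDiagAbsSum_castSucc]
  exact (hA.schurLast_row_bounds i (by simp)).2

theorem IsDiagDominant.det_eq_mul_det_schurLast (hA : A.IsDiagDominant) :
    A.det = A (Fin.last n) (Fin.last n) * A.schurLast.det := by
  obtain h0 | h0 := eq_or_ne (A (Fin.last n) (Fin.last n)) 0
  · rw [det_eq_zero_of_row_eq_zero _ (hA.eq_zero_of_diag_eq_zero h0), h0, zero_mul]
  · exact Matrix.det_eq_mul_det_schurLast A h0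

end SchurLast

theorem IsDiagDominant.prod_sub_superDiagAbsSum_le_det :
    ∀ {n : ℕ} {A : Matrix (Fin n) (Fin n) ℝ}, A.IsDiagDominant →
      ∏ i, (A i i - superDiagAbsSum A i) ≤ A.det
  | 0, A, _ => by simp
  | n + 1, A, hA => by
    have ha := hA.diag_nonneg (Fin.last n)
    calc ∏ i, (A i i - superDiagAbsSum A i)
        = (∏ i : Fin n, (A i.castSucc i.castSucc - superDiagAbsSum A i.castSucc))
            * A (Fin.last n) (Fin.last n) := by
          rw [Fin.prod_univ_castSucc, superDiagAbsSum_last, sub_zero]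
      _ ≤ (∏ i, (A.schurLast i i - superDiagAbsSum A.schurLast i))
            * A (Fin.last n) (Fin.last n) := by
          refine mul_le_mul_of_nonneg_right (prod_le_prod (fun i _ => ?_) fun i _ => ?_) ha
          · exact sub_nonneg.2 (hA.superDiagAbsSum_le _)
          · exact hA.sub_superDiagAbsSum_castSucc_le i
      _ ≤ A.schurLast.det * A (Fin.last n) (Fin.last n) := by
          gcongr
          exact hA.schurLast.prod_sub_superDiagAbsSum_le_det
      _ = A.det := by rw [hA.det_eq_mul_det_schurLast, mul_comm]

theorem IsDiagDominant.det_le_prod_add_superDiagAbsSum :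
    ∀ {n : ℕ} {A : Matrix (Fin n) (Fin n) ℝ}, A.IsDiagDominant →
      A.det ≤ ∏ i, (A i i + superDiagAbsSum A i)
  | 0, A, _ => by simp
  | n + 1, A, hA => by
    have ha := hA.diag_nonneg (Fin.last n)
    calc A.det = A.schurLast.det * A (Fin.last n) (Fin.last n) := by
          rw [hA.det_eq_mul_det_schurLast, mul_comm]
      _ ≤ (∏ i, (A.schurLast i i + superDiagAbsSum A.schurLast i))
            * A (Fin.last n) (Fin.last n) := by
          gcongr
          exact hA.schurLast.det_le_prod_add_superDiagAbsSum
      _ ≤ (∏ i : Fin n, (A i.castSucc i.castSucc + superDiagAbsSum A i.castSucc))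
            * A (Fin.last n) (Fin.last n) := by
          refine mul_le_mul_of_nonneg_right (prod_le_prod (fun i _ => ?_) fun i _ => ?_) ha
          · exact add_nonneg (hA.schurLast.diag_nonneg i) (superDiagAbsSum_nonneg _ i)
          · exact hA.add_superDiagAbsSum_schurLast_le i
      _ = ∏ i, (A i i + superDiagAbsSum A i) := by
          rw [Fin.prod_univ_castSucc, superDiagAbsSum_last, add_zero]

end Matrix

/-- Price's bound: for a real matrix with (weakly) dominant nonnegative diagonal,
the determinant is bounded between `∏ (aᵢᵢ - rᵢ)` and `∏ (aᵢᵢ + rᵢ)`, where `rᵢ`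
is the sum of the absolute values of the strictly super-diagonal entries of row `i`. -/
theorem price_det_bounds {n : ℕ} (A : Matrix (Fin n) (Fin n) ℝ)
    (h : ∀ i : Fin n, ∑ j ∈ univ \ {i}, |A i j| ≤ A i i) :
    (∏ i : Fin n, (A i i - ∑ j ∈ univ.filter (fun j => i < j), |A i j|)) ≤ A.det ∧
      A.det ≤ ∏ i : Fin n, (A i i + ∑ j ∈ univ.filter (fun j => i < j), |A i j|) :=
  ⟨Matrix.IsDiagDominant.prod_sub_superDiagAbsSum_le_det h,
    Matrix.IsDiagDominant.det_le_prod_add_superDiagAbsSum h⟩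
end

section
/- For an n×n complex matrix A, the spectral abscissa s(A) = max{Re λ : λ eigenvalue of A} satisfies s(A) = lim_{t→∞} (ln ‖e^{tA}‖)/t = inf_{t>0} (ln ‖e^{tA}‖)/t, for any operator norm ‖·‖. -/
/-!
An eigenvector of `f` for `λ` is an eigenvector of `exp (t • f)` for `exp (t λ)`, so
`exp (t s) ≤ ‖exp (t • f)‖` for every `t`; hence `s` is a lower bound of the quotients.
Conversely, `exp f` commutes with `f`, so each eigenspace of `exp f` contains an eigenvector of `f`;
thus every eigenvalue of `exp f` is `exp λ` with `λ` in the spectrum of `f`, the spectral radius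
of `exp f` is `exp s`, and Gelfand's formula gives `log ‖exp (n • f)‖ / n → s` along integers.
Since `exp (t • f) = exp (⌊t⌋ • f) * exp ((t - ⌊t⌋) • f)` and the second factor stays bounded, the
limit extends to real `t`, and a lower bound that is approached is the infimum.
-/

open Filter Topology NormedSpace Set

theorem Module.End.HasEigenvalue.exists_hasEigenvector_of_commute {K V : Type*} [Field K]
    [IsAlgClosed K] [AddCommGroup V] [Module K V] [FiniteDimensional K V]
    {f g : Module.End K V} {μ : K} (hμ : f.HasEigenvalue μ) (hfg : Commute f g) :
    ∃ ν v, f.HasEigenvector μ v ∧ g.HasEigenvector ν v := by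
  have hW : ∀ x ∈ f.eigenspace μ, g x ∈ f.eigenspace μ :=
    fun x hx => Module.End.mapsTo_genEigenspace_of_comm hfg μ 1 hx
  have : Nontrivial (f.eigenspace μ) := Submodule.nontrivial_iff_ne_bot.mpr hμ
  obtain ⟨ν, hν⟩ := Module.End.exists_eigenvalue (g.restrict hW)
  obtain ⟨w, hw, hw0⟩ := hν.exists_hasEigenvector
  refine ⟨ν, w, ⟨w.2, by simpa using hw0⟩,
    Module.End.eigenspace_restrict_le_eigenspace g hW ν ⟨w, hw, rfl⟩, by simpa using hw0⟩

theorem tendsto_log_norm_pow_div {A : Type*} [NormedRing A] [NormedAlgebra ℂ A] [CompleteSpace A]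
    {a : A} {r : ℝ} (hr : 0 < r) (ha : spectralRadius ℂ a = ENNReal.ofReal r) :
    Tendsto (fun n : ℕ => Real.log ‖a ^ n‖ / n) atTop (𝓝 (Real.log r)) := by
  have h := spectrum.pow_norm_pow_one_div_tendsto_nhds_spectralRadius a
  rw [ha, ← ENNReal.tendsto_toReal_iff (fun _ => ENNReal.ofReal_ne_top) ENNReal.ofReal_ne_top,
    ENNReal.toReal_ofReal hr.le] at h
  refine (h.log hr.ne').congr fun n => ?_
  rw [ENNReal.toReal_ofReal (by positivity)]
  rcases (norm_nonneg (a ^ n)).eq_or_lt with h0 | hpos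
  · rcases eq_or_ne n 0 with rfl | hn
    · simp
    · rw [← h0, Real.zero_rpow (by positivity), Real.log_zero, zero_div]
  · rw [Real.log_rpow hpos, one_div, inv_mul_eq_div]

namespace ContinuousLinearMap

theorem norm_le_opNorm_of_apply_eq_smul {𝕜 E : Type*} [NontriviallyNormedField 𝕜]
    [NormedAddCommGroup E] [NormedSpace 𝕜 E] {T : E →L[𝕜] E} {μ : 𝕜} {v : E}
    (hv0 : v ≠ 0) (hv : T v = μ • v) : ‖μ‖ ≤ ‖T‖ := by
  refine le_of_mul_le_mul_right ?_ (norm_pos_iff.mpr hv0)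
  calc ‖μ‖ * ‖v‖ = ‖T v‖ := by rw [← norm_smul, hv]
    _ ≤ ‖T‖ * ‖v‖ := T.le_opNorm v

theorem exp_apply_of_hasEigenvector {𝕂 E : Type*} [RCLike 𝕂] [NormedAddCommGroup E]
    [NormedSpace 𝕂 E] [CompleteSpace E] {T : E →L[𝕂] E} {μ : 𝕂} {v : E}
    (hv : Module.End.HasEigenvector (T : Module.End 𝕂 E) μ v) :
    exp T v = exp μ • v := by
  have hT := (exp_series_hasSum_exp' (𝕂 := 𝕂) T).mapL (apply 𝕂 E v)
  have hμ := (exp_series_hasSum_exp' (𝕂 := 𝕂) μ).smul_const v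
  refine hT.unique (hμ.congr_fun fun n => ?_)
  rw [apply_apply, smul_apply, ← coe_coe, toLinearMap_pow, hv.pow_apply, smul_smul, smul_eq_mul]

theorem hasEigenvalue_iff_mem_spectrum {𝕜 E : Type*} [NontriviallyNormedField 𝕜]
    [NormedAddCommGroup E] [NormedSpace 𝕜 E] [FiniteDimensional 𝕜 E] [CompleteSpace E]
    {T : E →L[𝕜] E} {μ : 𝕜} :
    Module.End.HasEigenvalue (T : Module.End 𝕜 E) μ ↔ μ ∈ spectrum 𝕜 T := by
  rw [spectrum_eq, Module.End.hasEigenvalue_iff_mem_spectrum]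

section FiniteDimensional

variable {E : Type*} [NormedAddCommGroup E] [NormedSpace ℂ E] [FiniteDimensional ℂ E]
  [CompleteSpace E]

theorem spectrum_exp_subset (T : E →L[ℂ] E) : spectrum ℂ (exp T) ⊆ exp '' spectrum ℂ T := by
  intro μ hμ
  have hcomm : Commute ((exp T : E →L[ℂ] E) : Module.End ℂ E) T :=
    (Commute.refl T).exp_left.map toLinearMapRingHom
  obtain ⟨ν, v, hμv, hνv⟩ :=
    (hasEigenvalue_iff_mem_spectrum.mpr hμ).exists_hasEigenvector_of_commute hcomm
  refine ⟨ν, hasEigenvalue_iff_mem_spectrum.mp (Module.End.hasEigenvalue_of_hasEigenvector hνv),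
    smul_left_injective ℂ hνv.2 ?_⟩
  change exp ν • v = μ • v
  rw [← exp_apply_of_hasEigenvector hνv, ← coe_coe, hμv.apply_eq_smul]

theorem spectralRadius_exp {T : E →L[ℂ] E} {s : ℝ}
    (hs : IsGreatest (Complex.re '' spectrum ℂ T) s) :
    spectralRadius ℂ (exp T) = ENNReal.ofReal (Real.exp s) := by
  have hmono : Monotone fun r => ENNReal.ofReal (Real.exp r) :=
    ENNReal.ofReal_mono.comp Real.exp_monotone
  have hnorm (z : ℂ) : (‖exp z‖₊ : ENNReal) = ENNReal.ofReal (Real.exp z.re) := by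
    rw [← Complex.exp_eq_exp_ℂ, ← enorm_eq_nnnorm, ← ofReal_norm, Complex.norm_exp]
  refine le_antisymm (iSup₂_le fun μ hμ => ?_) ?_
  · obtain ⟨ν, hν, rfl⟩ := spectrum_exp_subset T hμ
    rw [hnorm]
    exact hmono (hs.2 ⟨ν, hν, rfl⟩)
  · obtain ⟨ν, hν, rfl⟩ := hs.1
    rw [← hnorm]
    exact le_iSup₂ (f := fun z _ => (‖z‖₊ : ENNReal)) _ (spectrum.exp_mem_exp T hν)

theorem exp_mul_le_norm_exp_smul {T : E →L[ℂ] E} {s : ℝ} (hs : s ∈ Complex.re '' spectrum ℂ T)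
    (t : ℝ) : Real.exp (t * s) ≤ ‖exp (t • T)‖ := by
  obtain ⟨μ, hμ, rfl⟩ := hs
  obtain ⟨v, hv⟩ := (hasEigenvalue_iff_mem_spectrum.mpr hμ).exists_hasEigenvector
  have htv : Module.End.HasEigenvector ((t • T : E →L[ℂ] E) : Module.End ℂ E) (t * μ) v := by
    refine ⟨Module.End.mem_eigenspace_iff.mpr ?_, hv.2⟩
    rw [coe_coe, ← Complex.coe_smul, smul_apply, ← coe_coe, hv.apply_eq_smul, smul_smul]
  calc Real.exp (t * μ.re) = ‖exp ((t : ℂ) * μ)‖ := by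
        rw [← Complex.exp_eq_exp_ℂ, Complex.norm_exp, Complex.re_ofReal_mul]
    _ ≤ ‖exp (t • T)‖ := norm_le_opNorm_of_apply_eq_smul hv.2 (exp_apply_of_hasEigenvector htv)

theorem tendsto_log_norm_exp_natCast_smul_div {T : E →L[ℂ] E} {s : ℝ}
    (hs : IsGreatest (Complex.re '' spectrum ℂ T) s) :
    Tendsto (fun n : ℕ => Real.log ‖exp ((n : ℝ) • T)‖ / n) atTop (𝓝 s) := by
  -- `exp_nsmul` needs a `ℚ`-algebra structure, which is not an instance on `E →L[ℂ] E`.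
  let _ : NormedAlgebra ℚ (E →L[ℂ] E) := .restrictScalars ℚ ℂ _
  simpa only [Nat.cast_smul_eq_nsmul, exp_nsmul, Real.log_exp] using
    tendsto_log_norm_pow_div (Real.exp_pos s) (spectralRadius_exp hs)

end FiniteDimensional

end ContinuousLinearMap

theorem exists_norm_exp_smul_le_mul {𝔸 : Type*} [NormedRing 𝔸] [NormedAlgebra ℝ 𝔸]
    [CompleteSpace 𝔸] (a : 𝔸) :
    ∃ C > 0, ∀ t : ℝ, 0 ≤ t → ‖exp (t • a)‖ ≤ ‖exp ((⌊t⌋₊ : ℝ) • a)‖ * C := by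
  let _ : NormedAlgebra ℚ 𝔸 := .restrictScalars ℚ ℝ 𝔸
  have hcont : Continuous fun r : ℝ => exp (r • a) := by fun_prop
  obtain ⟨C, hC⟩ := (isCompact_Icc (a := (0 : ℝ)) (b := 1)).exists_bound_of_continuousOn
    hcont.continuousOn
  refine ⟨max C 1, by positivity, fun t ht => ?_⟩
  have hsplit : exp (t • a) = exp ((⌊t⌋₊ : ℝ) • a) * exp ((t - ⌊t⌋₊) • a) := by
    rw [← exp_add_of_commute (((Commute.refl a).smul_left _).smul_right _), ← add_smul,
      add_sub_cancel]
  have hfrac : t - ⌊t⌋₊ ∈ Icc (0 : ℝ) 1 :=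
    ⟨sub_nonneg.2 (Nat.floor_le ht), by linarith [Nat.lt_floor_add_one t]⟩
  calc ‖exp (t • a)‖ ≤ ‖exp ((⌊t⌋₊ : ℝ) • a)‖ * ‖exp ((t - ⌊t⌋₊) • a)‖ :=
        hsplit ▸ norm_mul_le _ _
    _ ≤ ‖exp ((⌊t⌋₊ : ℝ) • a)‖ * max C 1 := by gcongr; exact (hC _ hfrac).trans (le_max_left _ _)

theorem tendsto_div_of_nat_of_le_floor_add {φ : ℝ → ℝ} {s K : ℝ}
    (hnat : Tendsto (fun n : ℕ => φ n / n) atTop (𝓝 s)) (hlow : ∀ᶠ t in atTop, s ≤ φ t / t)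
    (hup : ∀ᶠ t in atTop, φ t ≤ φ ⌊t⌋₊ + K) : Tendsto (fun t => φ t / t) atTop (𝓝 s) := by
  have hbound : Tendsto (fun t : ℝ => ⌊t⌋₊ / t * (φ ⌊t⌋₊ / ⌊t⌋₊) + K / t) atTop
      (𝓝 (1 * s + 0)) :=
    (tendsto_nat_floor_div_atTop.mul (hnat.comp tendsto_nat_floor_atTop)).add
      (tendsto_const_nhds.div_atTop tendsto_id)
  rw [one_mul, add_zero] at hbound
  refine tendsto_of_tendsto_of_tendsto_of_le_of_le' tendsto_const_nhds hbound hlow ?_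
  filter_upwards [hup, eventually_ge_atTop 1] with t ht h1
  have hn : (0 : ℝ) < ⌊t⌋₊ := by exact_mod_cast Nat.floor_pos.mpr h1
  calc φ t / t ≤ (φ ⌊t⌋₊ + K) / t := div_le_div_of_nonneg_right ht (by linarith)
    _ = ⌊t⌋₊ / t * (φ ⌊t⌋₊ / ⌊t⌋₊) + K / t := by field_simp

theorem ciInf_Ioi_eq_of_tendsto {φ : ℝ → ℝ} {s : ℝ} (hlow : ∀ t > 0, s ≤ φ t)
    (hφ : Tendsto φ atTop (𝓝 s)) : ⨅ t : Ioi (0 : ℝ), φ t = s := by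
  have hbdd : BddBelow (range fun t : Ioi (0 : ℝ) => φ t) :=
    ⟨s, forall_mem_range.2 fun t => hlow t t.2⟩
  refine le_antisymm (ge_of_tendsto hφ ?_) (le_ciInf fun t => hlow t t.2)
  filter_upwards [eventually_gt_atTop 0] with t ht using ciInf_le hbdd ⟨t, ht⟩

theorem spectral_abscissa_limit_general {E : Type*} [NormedAddCommGroup E]
    [NormedSpace ℂ E] [FiniteDimensional ℂ E] [CompleteSpace E]
    (f : E →L[ℂ] E) (s : ℝ)
    (hs : IsGreatest (Complex.re '' spectrum ℂ f) s) :
    Tendsto (fun t : ℝ => Real.log ‖NormedSpace.exp (t • f)‖ / t) atTop (nhds s) ∧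
      s = ⨅ t : Set.Ioi (0 : ℝ), Real.log ‖NormedSpace.exp ((t : ℝ) • f)‖ / (t : ℝ) := by
  have hlow := f.exp_mul_le_norm_exp_smul hs.1
  have hpos (t : ℝ) : 0 < ‖exp (t • f)‖ := (Real.exp_pos _).trans_le (hlow t)
  have hdiv (t : ℝ) (ht : 0 < t) : s ≤ Real.log ‖exp (t • f)‖ / t := by
    rw [le_div_iff₀ ht, mul_comm, Real.le_log_iff_exp_le (hpos t)]
    exact hlow t
  obtain ⟨C, hC0, hC⟩ := exists_norm_exp_smul_le_mul f
  have hup : ∀ᶠ t : ℝ in atTop,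
      Real.log ‖exp (t • f)‖ ≤ Real.log ‖exp ((⌊t⌋₊ : ℝ) • f)‖ + Real.log C := by
    filter_upwards [eventually_ge_atTop 0] with t ht
    rw [← Real.log_mul (hpos _).ne' hC0.ne']
    exact Real.log_le_log (hpos t) (hC t ht)
  have hlim := tendsto_div_of_nat_of_le_floor_add (f.tendsto_log_norm_exp_natCast_smul_div hs)
    ((eventually_gt_atTop 0).mono hdiv) hup
  exact ⟨hlim, (ciInf_Ioi_eq_of_tendsto hdiv hlim).symm⟩

/-- The spectral abscissa `s(A) = max { Re λ : λ ∈ spectrum A }` satisfies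
`s(A) = lim_{t→∞} (ln ‖e^{tA}‖)/t = inf_{t>0} (ln ‖e^{tA}‖)/t` for any operator norm. -/
theorem spectral_abscissa_limit {E : Type*} [NormedAddCommGroup E]
    [NormedSpace ℂ E] [FiniteDimensional ℂ E] [CompleteSpace E] [Nontrivial E]
    (f : E →L[ℂ] E) (s : ℝ)
    (hs : IsGreatest (Complex.re '' spectrum ℂ f) s) :
    Tendsto (fun t : ℝ => Real.log ‖NormedSpace.exp (t • f)‖ / t) atTop (nhds s) ∧
      s = ⨅ t : Set.Ioi (0 : ℝ), Real.log ‖NormedSpace.exp ((t : ℝ) • f)‖ / (t : ℝ) :=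
  spectral_abscissa_limit_general f s hs
end

section
/- For an n×n complex matrix A and any operator norm, ‖e^{tA}‖ ≤ e^{t μ(A)} for all t ≥ 0, where μ(A) is the Lozinskii measure of A. -/
/-!
Since `e^{(s+t)A} = e^{sA} e^{tA}`, the function `g t = ‖e^{tA}‖` is submultiplicative, so
`g t ≤ g (t/n)^n`. As `e^{hA} = 1 + hA + o(h)`, the slopes `(g h - 1)/h` have the same limit `μ(A)`
as `(‖1 + hA‖ - 1)/h`; hence `g h ≤ 1 + h(μ(A) + ε)` for small `h > 0`, and
`g t ≤ (1 + (t/n)(μ(A) + ε))^n ≤ e^{t(μ(A) + ε)}` for large `n`. Finally let `ε → 0`.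
-/

open Filter Topology NormedSpace

theorem le_pow_succ_of_submultiplicative {g : ℝ → ℝ} (hg_nonneg : ∀ x, 0 ≤ x → 0 ≤ g x)
    (hg_mul : ∀ x y, 0 ≤ x → 0 ≤ y → g (x + y) ≤ g x * g y) {s : ℝ} (hs : 0 ≤ s) (n : ℕ) :
    g ((n + 1) * s) ≤ g s ^ (n + 1) := by
  induction n with
  | zero => simp
  | succ n ih =>
    calc g ((↑(n + 1) + 1) * s) = g ((n + 1) * s + s) := by push_cast; ring_nf
      _ ≤ g ((n + 1) * s) * g s := hg_mul _ _ (by positivity) hs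
      _ ≤ g s ^ (n + 1) * g s := mul_le_mul_of_nonneg_right ih (hg_nonneg s hs)
      _ = g s ^ (n + 1 + 1) := (pow_succ _ _).symm

theorem le_exp_mul_of_eventually_le_one_add_mul {g : ℝ → ℝ} (hg_nonneg : ∀ x, 0 ≤ x → 0 ≤ g x)
    (hg_mul : ∀ x y, 0 ≤ x → 0 ≤ y → g (x + y) ≤ g x * g y) {c : ℝ}
    (hc : ∀ᶠ h in 𝓝[>] 0, g h ≤ 1 + h * c) {t : ℝ} (ht : 0 < t) :
    g t ≤ Real.exp (t * c) := by
  have hsteps : Tendsto (fun n : ℕ => t / (n + 1)) atTop (𝓝[>] 0) :=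
    tendsto_nhdsWithin_of_tendsto_nhds_of_eventually_within _
      (tendsto_const_div_atTop_nhds_zero_nat t |>.comp (tendsto_add_atTop_nat 1) |>.congr
        fun n => by simp)
      (Eventually.of_forall fun n => div_pos ht (by positivity))
  obtain ⟨n, hn⟩ := (hsteps.eventually hc).exists
  set s := t / (n + 1) with hs_def
  have hs : 0 ≤ s := by positivity
  have ht_eq : t = (n + 1) * s := by rw [hs_def]; field_simp
  calc g t ≤ g s ^ (n + 1) := ht_eq ▸ le_pow_succ_of_submultiplicative hg_nonneg hg_mul hs n
    _ ≤ (1 + s * c) ^ (n + 1) := pow_le_pow_left₀ (hg_nonneg s hs) hn _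
    _ ≤ Real.exp (s * c) ^ (n + 1) :=
        pow_le_pow_left₀ ((hg_nonneg s hs).trans hn) (by linarith [Real.add_one_le_exp (s * c)]) _
    _ = Real.exp (t * c) := by rw [← Real.exp_nat_mul, ht_eq]; push_cast; ring_nf

theorem le_exp_mul_of_tendsto_slope {g : ℝ → ℝ} (hg_nonneg : ∀ x, 0 ≤ x → 0 ≤ g x)
    (hg_mul : ∀ x y, 0 ≤ x → 0 ≤ y → g (x + y) ≤ g x * g y) {m : ℝ}
    (hslope : Tendsto (fun h => (g h - 1) / h) (𝓝[>] 0) (𝓝 m)) {t : ℝ} (ht : 0 < t) :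
    g t ≤ Real.exp (t * m) := by
  have hbound : ∀ ε > 0, g t ≤ Real.exp (t * (m + ε)) := fun ε hε =>
    le_exp_mul_of_eventually_le_one_add_mul hg_nonneg hg_mul (by
      filter_upwards [self_mem_nhdsWithin, hslope.eventually (gt_mem_nhds (lt_add_of_pos_right m hε))]
        with h (hh : 0 < h) hlt
      rw [div_lt_iff₀ hh] at hlt
      linarith) ht
  have hlim : Tendsto (fun ε => Real.exp (t * (m + ε))) (𝓝[>] 0) (𝓝 (Real.exp (t * m))) := by
    refine tendsto_nhdsWithin_of_tendsto_nhds ?_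
    simpa using ((continuous_const.add continuous_id).const_mul t).rexp.tendsto (0 : ℝ)
  exact ge_of_tendsto hlim (eventually_nhdsWithin_of_forall hbound)

section BanachAlgebra

variable {𝔸 : Type*} [NormedRing 𝔸] [NormedAlgebra ℝ 𝔸] [CompleteSpace 𝔸]

theorem norm_exp_add_smul_le (a : 𝔸) (s t : ℝ) :
    ‖exp ((s + t) • a)‖ ≤ ‖exp (s • a)‖ * ‖exp (t • a)‖ := by
  have hball (x : 𝔸) : x ∈ Metric.eball 0 (expSeries ℝ 𝔸).radius :=
    (expSeries_radius_eq_top ℝ 𝔸).symm ▸ edist_lt_top _ _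
  rw [add_smul, exp_add_of_commute_of_mem_ball
    ((Commute.refl a).smul_left s |>.smul_right t) (hball _) (hball _)]
  exact norm_mul_le _ _

theorem isLittleO_exp_smul_sub_one_add_smul (a : 𝔸) :
    (fun h : ℝ => exp (h • a) - (1 + h • a)) =o[𝓝 0] fun h => h := by
  have := hasDerivAt_iff_isLittleO_nhds_zero.1 (hasDerivAt_exp_smul_const (𝕂 := ℝ) a 0)
  simpa [exp_zero, sub_sub] using this

theorem tendsto_norm_exp_smul_slope {a : 𝔸} {m : ℝ}
    (hm : Tendsto (fun h : ℝ => (‖1 + h • a‖ - 1) / h) (𝓝[>] 0) (𝓝 m)) :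
    Tendsto (fun h : ℝ => (‖exp (h • a)‖ - 1) / h) (𝓝[>] 0) (𝓝 m) := by
  have hdiff : (fun h : ℝ => ‖exp (h • a)‖ - ‖1 + h • a‖) =o[𝓝 0] fun h => h :=
    (Asymptotics.isBigO_of_le _ fun h => (Real.norm_eq_abs _).trans_le
      (abs_norm_sub_norm_le _ _)).trans_isLittleO (isLittleO_exp_smul_sub_one_add_smul a)
  simpa [sub_div] using (hdiff.tendsto_div_nhds_zero.mono_left nhdsWithin_le_nhds).add hm

end BanachAlgebra

theorem exp_norm_le_exp_lozinskii_general {E : Type*} [NormedAddCommGroup E]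
    [NormedSpace ℂ E] [CompleteSpace E]
    (f : E →L[ℂ] E) (m : ℝ)
    (hm : Tendsto (fun h : ℝ => (‖(1 : E →L[ℂ] E) + h • f‖ - 1) / h)
      (nhdsWithin 0 (Set.Ioi 0)) (nhds m)) :
    ∀ t : ℝ, 0 ≤ t → ‖NormedSpace.exp (t • f)‖ ≤ Real.exp (t * m) := by
  intro t ht
  rcases ht.eq_or_lt with rfl | ht
  · rw [zero_smul, exp_zero, zero_mul, Real.exp_zero]
    exact ContinuousLinearMap.norm_id_le
  have hslope := tendsto_norm_exp_smul_slope hm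
  have hmul (x y : ℝ) := norm_exp_add_smul_le f x y
  exact le_exp_mul_of_tendsto_slope (fun _ _ => norm_nonneg _) (fun x y _ _ => hmul x y) hslope ht

/-- `‖e^{tA}‖ ≤ e^{t μ(A)}` for `t ≥ 0`, where `μ(A)` is the Lozinskii measure
(logarithmic norm) of `A` with respect to an operator norm. -/
theorem exp_norm_le_exp_lozinskii {E : Type*} [NormedAddCommGroup E]
    [NormedSpace ℂ E] [FiniteDimensional ℂ E] [CompleteSpace E]
    (f : E →L[ℂ] E) (m : ℝ)
    (hm : Tendsto (fun h : ℝ => (‖(1 : E →L[ℂ] E) + h • f‖ - 1) / h)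
      (nhdsWithin 0 (Set.Ioi 0)) (nhds m)) :
    ∀ t : ℝ, 0 ≤ t → ‖NormedSpace.exp (t • f)‖ ≤ Real.exp (t * m) :=
  exp_norm_le_exp_lozinskii_general f m hm
end

section
/- Let a = β₁ - β₁₀ > 0, α = β₂+β₆+β₈+μ, E* = α/a, with all β_i ≥ 0 and μ > 0, β₁₀·B > 0 not required. For the 2×2 matrices F = [[0, β₁₀B/μ],[0, β₁B/μ]] and V = [[μ, β₁B/μ],[0, α + β₁₀B/μ]], V is invertible and the eigenvalues of F·V⁻¹ are 0 and R₀ = β₁B/(αμ + β₁₀B); hence the spectral radius of F·V⁻¹ equals R₀ when R₀ ≥ 0. -/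
open Polynomial

namespace Matrix

variable {K : Type*} [Field K]

theorem det_upperTriangular_fin_two (a b c : K) : (!![a, b; 0, c]).det = a * c := by
  simp [det_fin_two_of]

theorem charpoly_upperTriangular_fin_two (a b c : K) :
    (!![a, b; 0, c]).charpoly = (X - C a) * (X - C c) := by
  rw [charpoly_fin_two, det_upperTriangular_fin_two, trace_fin_two_of, map_add, map_mul]
  ring

theorem mul_inv_upperTriangular_fin_two (p q a b c : K) (ha : a ≠ 0) (hc : c ≠ 0) :
    !![0, p; 0, q] * (!![a, b; 0, c])⁻¹ = !![0, p / c; 0, q / c] := by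
  have hV : IsUnit (!![a, b; 0, c]).det := by
    rw [det_upperTriangular_fin_two]
    exact (mul_ne_zero ha hc).isUnit
  have hF : !![0, p; 0, q] = !![0, p / c; 0, q / c] * !![a, b; 0, c] := by
    simp [div_mul_cancel₀ _ hc]
  rw [hF, mul_nonsing_inv_cancel_right _ _ hV]

end Matrix

theorem isGreatest_abs_roots_X_mul_X_sub_C {r : ℝ} (hr : 0 ≤ r) :
    IsGreatest {s : ℝ | ∃ x : ℝ, (X * (X - C r)).IsRoot x ∧ s = |x|} r := by
  refine ⟨⟨r, by simp, (abs_of_nonneg hr).symm⟩, ?_⟩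
  rintro s ⟨x, hx, rfl⟩
  simp only [IsRoot.def, eval_mul, eval_X, eval_sub, eval_C, mul_eq_zero, sub_eq_zero] at hx
  rcases hx with rfl | rfl
  · simpa using hr
  · exact (abs_of_nonneg hr).le

theorem next_generation_R0_general
    (B μ β₁ β₂ β₆ β₈ β₁₀ : ℝ) (hB : 0 < B) (hμ : 0 < μ)
    (h2 : 0 ≤ β₂) (h6 : 0 ≤ β₆) (h8 : 0 ≤ β₈) (h10 : 0 ≤ β₁₀)
    (α : ℝ) (hα : α = β₂ + β₆ + β₈ + μ)
    (F V : Matrix (Fin 2) (Fin 2) ℝ)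
    (hF : F = !![0, β₁₀ * B / μ; 0, β₁ * B / μ])
    (hV : V = !![μ, β₁ * B / μ; 0, α + β₁₀ * B / μ])
    (R₀ : ℝ) (hR : R₀ = β₁ * B / (α * μ + β₁₀ * B)) :
    IsUnit V.det ∧
      (F * V⁻¹).charpoly = X * (X - C R₀) ∧
      (0 ≤ R₀ →
        IsGreatest {r : ℝ | ∃ x : ℝ, (F * V⁻¹).charpoly.IsRoot x ∧ r = |x|} R₀) := by
  have hα0 : 0 < α := by linarith
  have hc : 0 < α + β₁₀ * B / μ := by positivity
  have hR₀ : β₁ * B / μ / (α + β₁₀ * B / μ) = R₀ := by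
    rw [hR]
    field_simp
  have hFV : F * V⁻¹ = !![0, β₁₀ * B / μ / (α + β₁₀ * B / μ); 0, R₀] := by
    rw [hF, hV, Matrix.mul_inv_upperTriangular_fin_two _ _ _ _ _ hμ.ne' hc.ne', hR₀]
  have hchar : (F * V⁻¹).charpoly = X * (X - C R₀) := by
    rw [hFV, Matrix.charpoly_upperTriangular_fin_two, map_zero, sub_zero]
  refine ⟨?_, hchar, fun hR0 => hchar ▸ isGreatest_abs_roots_X_mul_X_sub_C hR0⟩
  rw [hV, Matrix.det_upperTriangular_fin_two]
  exact (mul_pos hμ hc).ne'.isUnit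

/-- Next-generation computation at the disease-free equilibrium: `V` is invertible, the
eigenvalues of `F·V⁻¹` are `0` and `R₀ = β₁B/(αμ + β₁₀B)` (its characteristic polynomial
is `X(X - R₀)`), hence when `R₀ ≥ 0` the spectral radius of `F·V⁻¹` equals `R₀`. -/
theorem next_generation_R0
    (B μ β₁ β₂ β₆ β₈ β₁₀ : ℝ) (hB : 0 < B) (hμ : 0 < μ)
    (h1 : 0 ≤ β₁) (h2 : 0 ≤ β₂) (h6 : 0 ≤ β₆) (h8 : 0 ≤ β₈) (h10 : 0 ≤ β₁₀)
    (α : ℝ) (hα : α = β₂ + β₆ + β₈ + μ)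
    (F V : Matrix (Fin 2) (Fin 2) ℝ)
    (hF : F = !![0, β₁₀ * B / μ; 0, β₁ * B / μ])
    (hV : V = !![μ, β₁ * B / μ; 0, α + β₁₀ * B / μ])
    (R₀ : ℝ) (hR : R₀ = β₁ * B / (α * μ + β₁₀ * B)) :
    IsUnit V.det ∧
      (F * V⁻¹).charpoly = X * (X - C R₀) ∧
      (0 ≤ R₀ →
        IsGreatest {r : ℝ | ∃ x : ℝ, (F * V⁻¹).charpoly.IsRoot x ∧ r = |x|} R₀) :=
  next_generation_R0_general B μ β₁ β₂ β₆ β₈ β₁₀ hB hμ h2 h6 h8 h10 α hα F V hF hV R₀ hR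
end
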